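/- For an n×n boolean matrix A and any natural number m with 2^m ≥ n, the product ∏_{k=0}^{m} (I + A^{2^k}) = (I+A)(I+A^2)(I+A^4)⋯(I+A^{2^m}) equals the reflexive-transitive closure ∑_{k=0}^∞ A^k. -/
import Mathlib


/-- Boolean matrix addition: entrywise OR. -/
def bAdd {m n : ℕ} (A B : Matrix (Fin m) (Fin n) Prop) : Matrix (Fin m) (Fin n) Prop :=
  Matrix.of fun i j => A i j ∨ B i j

/-- Boolean matrix multiplication: (AB)_{ij} = ⋁_k A_{ik} ∧ B_{kj}. -/
def bMul {m n p : ℕ} (A : Matrix (Fin m) (Fin n) Prop) (B : Matrix (Fin n) (Fin p) Prop) :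
    Matrix (Fin m) (Fin p) Prop :=
  Matrix.of fun i j => ∃ k, A i k ∧ B k j

/-- Identity boolean matrix. -/
def bId (n : ℕ) : Matrix (Fin n) (Fin n) Prop := Matrix.of fun i j => i = j

/-- Boolean matrix power, A^0 = I. -/
def bPow {n : ℕ} (A : Matrix (Fin n) (Fin n) Prop) : ℕ → Matrix (Fin n) (Fin n) Prop
  | 0 => bId n
  | k + 1 => bMul A (bPow A k)

/-- ∑_{k=0}^{∞} A^k : reflexive-transitive closure. -/
def bClosure {n : ℕ} (A : Matrix (Fin n) (Fin n) Prop) : Matrix (Fin n) (Fin n) Prop :=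
  Matrix.of fun i j => ∃ k, bPow A k i j

/-- ∑_{k=1}^{∞} A^k : transitive closure. -/
def bTC {n : ℕ} (A : Matrix (Fin n) (Fin n) Prop) : Matrix (Fin n) (Fin n) Prop :=
  Matrix.of fun i j => ∃ k, 0 < k ∧ bPow A k i j

/-- Entrywise order on boolean matrices. -/
def bLe {m n : ℕ} (A B : Matrix (Fin m) (Fin n) Prop) : Prop := ∀ i j, A i j → B i j

/-- The logarithmic product ∏_{k=0}^{m} (I + A^{2^k}). -/
def logProd {n : ℕ} (A : Matrix (Fin n) (Fin n) Prop) : ℕ → Matrix (Fin n) (Fin n) Prop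
  | 0 => bAdd (bId n) A
  | m + 1 => bMul (logProd A m) (bAdd (bId n) (bPow A (2 ^ (m + 1))))

lemma bPow_add {n : ℕ} (A : Matrix (Fin n) (Fin n) Prop) (a b : ℕ) :
    ∀ i j, bPow A (a + b) i j ↔ ∃ x, bPow A a i x ∧ bPow A b x j := by
  induction a with
  | zero =>
    intro i j
    simp [bPow, bId, bMul, Matrix.of_apply]
  | succ a ih =>
    intro i j
    have h1 : a + 1 + b = (a + b) + 1 := by omega
    rw [h1]
    show (∃ y, A i y ∧ bPow A (a + b) y j) ↔
      ∃ x, (∃ y, A i y ∧ bPow A a y x) ∧ bPow A b x j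
    constructor
    · rintro ⟨y, hy, hp⟩
      obtain ⟨x, h1, h2⟩ := (ih y j).mp hp
      exact ⟨x, ⟨y, hy, h1⟩, h2⟩
    · rintro ⟨x, ⟨y, hy, h1⟩, h2⟩
      exact ⟨y, hy, (ih y j).mpr ⟨x, h1, h2⟩⟩

lemma bPow_one {n : ℕ} (A : Matrix (Fin n) (Fin n) Prop) (i j : Fin n) :
    bPow A 1 i j ↔ A i j := by
  show (∃ x, A i x ∧ bId n x j) ↔ A i j
  simp [bId]

lemma bPow_succ_right {n : ℕ} (A : Matrix (Fin n) (Fin n) Prop) (k : ℕ) (i j : Fin n) :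
    bPow A (k + 1) i j ↔ ∃ x, bPow A k i x ∧ A x j := by
  rw [bPow_add A k 1]
  simp_rw [bPow_one]

lemma logProd_iff {n : ℕ} (A : Matrix (Fin n) (Fin n) Prop) :
    ∀ m i j, logProd A m i j ↔ ∃ k < 2 ^ (m + 1), bPow A k i j := by
  intro m
  induction m with
  | zero =>
    intro i j
    show (bId n i j ∨ A i j) ↔ _
    constructor
    · rintro (hij | hij)
      · exact ⟨0, by norm_num, hij⟩
      · exact ⟨1, by norm_num, (bPow_one A i j).mpr hij⟩
    · rintro ⟨k, hk, hp⟩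
      interval_cases k
      · exact Or.inl hp
      · exact Or.inr ((bPow_one A i j).mp hp)
  | succ m ih =>
    intro i j
    show (∃ x, logProd A m i x ∧ (bId n x j ∨ bPow A (2 ^ (m + 1)) x j)) ↔ _
    constructor
    · rintro ⟨x, hx, hxj | hxj⟩
      · obtain ⟨k, hk, hp⟩ := (ih i x).mp hx
        have hxj' : x = j := hxj
        subst hxj'
        exact ⟨k, lt_of_lt_of_le hk (by have := Nat.pow_le_pow_right (by norm_num : 1 ≤ 2) (show m+1 ≤ m+2 by omega); omega), hp⟩
      · obtain ⟨k, hk, hp⟩ := (ih i x).mp hx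
        refine ⟨k + 2 ^ (m + 1), ?_, (bPow_add A k (2 ^ (m + 1)) i j).mpr ⟨x, hp, hxj⟩⟩
        have : 2 ^ (m + 2) = 2 ^ (m + 1) + 2 ^ (m + 1) := by ring
        omega
    · rintro ⟨k, hk, hp⟩
      by_cases hk2 : k < 2 ^ (m + 1)
      · exact ⟨j, (ih i j).mpr ⟨k, hk2, hp⟩, Or.inl (show (j : Fin n) = j from rfl)⟩
      · push_neg at hk2
        have hkeq : k = (k - 2 ^ (m + 1)) + 2 ^ (m + 1) := by omega
        rw [hkeq] at hp
        obtain ⟨x, h1, h2⟩ := (bPow_add A _ _ i j).mp hp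
        refine ⟨x, (ih i x).mpr ⟨k - 2 ^ (m + 1), ?_, h1⟩, Or.inr h2⟩
        have : 2 ^ (m + 2) = 2 ^ (m + 1) + 2 ^ (m + 1) := by ring
        omega

lemma closure_bound {n : ℕ} (A : Matrix (Fin n) (Fin n) Prop) (i j : Fin n)
    (hc : bClosure A i j) : ∃ k < n, bPow A k i j := by
  classical
  set P : ℕ → Fin n → Prop := fun k x => ∃ t ≤ k, bPow A t i x with hPdef
  have hmono : ∀ k k', k ≤ k' → ∀ x, P k x → P k' x := by
    rintro k k' hkk' x ⟨t, ht, hp⟩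
    exact ⟨t, le_trans ht hkk', hp⟩
  have hstep : ∀ k x, P (k + 1) x → P k x ∨ ∃ y, P k y ∧ A y x := by
    rintro k x ⟨t, ht, hp⟩
    rcases Nat.lt_or_ge t (k + 1) with h | h
    · exact Or.inl ⟨t, by omega, hp⟩
    · have : t = k + 1 := by omega
      subst this
      obtain ⟨y, h1, h2⟩ := (bPow_succ_right A k i x).mp hp
      exact Or.inr ⟨y, ⟨k, le_refl k, h1⟩, h2⟩
  have hstable : ∀ k, (∀ x, P (k + 1) x ↔ P k x) → ∀ t x, P t x → P k x := by
    intro k hk t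
    induction t with
    | zero => exact fun x hx => hmono 0 k (Nat.zero_le k) x hx
    | succ t ih =>
      intro x hx
      rcases hstep t x hx with h | ⟨y, hy, hyx⟩
      · exact ih x h
      · obtain ⟨s, hs, hp⟩ := ih y hy
        exact (hk x).mp ⟨s + 1, by omega, (bPow_succ_right A s i x).mpr ⟨y, hp, hyx⟩⟩
  have hex : ∃ k < n, ∀ x, P (k + 1) x ↔ P k x := by
    by_contra hcon
    push_neg at hcon
    set F : ℕ → Finset (Fin n) := fun k => Finset.univ.filter (fun x => P k x) with hF
    have hFs : ∀ k < n, F k ⊂ F (k + 1) := by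
      intro k hk
      obtain ⟨x, hx⟩ := hcon k hk
      have hsub : F k ⊆ F (k + 1) := by
        intro y hy
        simp only [hF, Finset.mem_filter, Finset.mem_univ, true_and] at hy ⊢
        exact hmono k (k + 1) (by omega) y hy
      rcases hx with ⟨h1, h2⟩ | ⟨h1, h2⟩
      · refine Finset.ssubset_iff_of_subset hsub |>.mpr ⟨x, ?_, ?_⟩ <;>
          simp only [hF, Finset.mem_filter, Finset.mem_univ, true_and]
        · exact h1
        · exact h2
      · exact absurd (hmono k (k + 1) (by omega) x h2) h1
    have hcard : ∀ k ≤ n, k + 1 ≤ (F k).card := by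
      intro k
      induction k with
      | zero =>
        intro _
        have : i ∈ F 0 := by
          simp only [hF, Finset.mem_filter, Finset.mem_univ, true_and]
          exact ⟨0, le_refl 0, show (i : Fin n) = i from rfl⟩
        have := Finset.card_pos.mpr ⟨i, this⟩
        omega
      | succ k ih =>
        intro hkn
        have h1 := ih (by omega)
        have h2 := Finset.card_lt_card (hFs k (by omega))
        omega
    have h1 := hcard n (le_refl n)
    have h2 : (F n).card ≤ n := by
      have := Finset.card_le_univ (F n)
      simpa using this
    omega
  obtain ⟨k0, hk0, hst⟩ := hex
  obtain ⟨t, hp⟩ := hc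
  obtain ⟨s, hs, hps⟩ := hstable k0 hst t j ⟨t, le_refl t, hp⟩
  exact ⟨s, by omega, hps⟩

/-- if 2^m ≥ n then (I+A)(I+A²)(I+A⁴)⋯(I+A^{2^m}) = ∑_{k=0}^{∞} A^k. -/
theorem bmlp_log_product_eq_closure (n m : ℕ) (A : Matrix (Fin n) (Fin n) Prop)
    (h : n ≤ 2 ^ m) :
    logProd A m = bClosure A := by
  ext i j
  show logProd A m i j ↔ bClosure A i j
  constructor
  · intro hl
    obtain ⟨k, _, hp⟩ := (logProd_iff A m i j).mp hl
    exact ⟨k, hp⟩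
  · intro hcl
    obtain ⟨k, hk, hp⟩ := closure_bound A i j hcl
    refine (logProd_iff A m i j).mpr ⟨k, ?_, hp⟩
    have : 2 ^ m < 2 ^ (m + 1) := by
      have := Nat.pow_lt_pow_right (show 1 < 2 by norm_num) (show m < m + 1 by omega)
      exact this
    omega
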